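/- arXiv:2210.01327 — 3 statements merged into one kernel-verified Lean document; each statement's English description precedes it below -/
import Mathlib

section
/- Let $G$ be a multigraph on vertex set $V$ with edge colouring $c : E \to Q$, and suppose $\ell \ge 1$ is the minimal integer for which there exists $I \subseteq Q$ with $|I| = \ell$ and $\kappa(C_I) \ge |Q| - \ell + 2$. Then for any such set $I$ with $|I|=\ell$ and $\kappa(C_I) \ge |Q| - \ell + 2$, the spanning subgraph $G_{C_I} = (V, C_I)$ has no bridges, i.e., there is no edge $e \in C_I$ whose removal increases the number of connected components of $(V, C_I)$. -/
/-!
If some `e ∈ C_I` were a bridge, then `J = I \ {c e}` satisfies `C_J ⊆ C_I \ {e}`, and since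
deleting edges can only increase `κ`, we get `κ(C_J) ≥ κ(C_I) + 1 ≥ |Q| - (ℓ - 1) + 2`,
contradicting the minimality of `ℓ`.
-/

open Finset

attribute [local instance] Classical.propDecidable

namespace Stmt4

/-- The simple graph on `V` underlying a set `S` of edge indices. -/
def graphOf {V E : Type*} (ends : E → Sym2 V) (S : Finset E) : SimpleGraph V :=
  SimpleGraph.fromRel (fun u v => ∃ e ∈ S, ends e = s(u, v))

/-- The number of connected components of the graph spanned by the edge set `S`. -/
noncomputable def kappa {V E : Type*} (ends : E → Sym2 V) (S : Finset E) : ℕ :=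
  Nat.card (graphOf ends S).ConnectedComponent

/-- The set of edges whose colour belongs to `I`. -/
noncomputable def colourClass {E Q : Type*} [Fintype E] (c : E → Q) (I : Finset Q) :
    Finset E :=
  Finset.univ.filter (fun e => c e ∈ I)

lemma graphOf_mono {V E : Type*} (ends : E → Sym2 V) {S T : Finset E} (h : S ⊆ T) :
    graphOf ends S ≤ graphOf ends T := fun _ _ ⟨hne, hadj⟩ =>
  ⟨hne, hadj.imp (fun ⟨e, he, hx⟩ => ⟨e, h he, hx⟩) (fun ⟨e, he, hx⟩ => ⟨e, h he, hx⟩)⟩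

lemma kappa_anti {V E : Type*} [Finite V] (ends : E → Sym2 V) {S T : Finset E} (h : S ⊆ T) :
    kappa ends T ≤ kappa ends S :=
  SimpleGraph.ConnectedComponent.card_le_card_of_le (graphOf_mono ends h)

lemma colourClass_erase_subset {E Q : Type*} [Fintype E] (c : E → Q) (I : Finset Q) (e : E) :
    colourClass c (I.erase (c e)) ⊆ (colourClass c I).erase e := by
  intro e' he'
  simp only [colourClass, mem_filter, mem_univ, true_and, mem_erase] at he' ⊢
  exact ⟨fun h => he'.1 (h ▸ rfl), he'.2⟩

theorem no_bridges_at_minimal_level_general {V E Q : Type*} [Fintype V] [Fintype E] [Fintype Q]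
    (ends : E → Sym2 V) (c : E → Q)
    (ℓ : ℕ) (hℓ : 1 ≤ ℓ)
    (hmin : ∀ ℓ' < ℓ, ¬ ∃ I : Finset Q, I.card = ℓ' ∧
        Fintype.card Q + 2 - ℓ' ≤ kappa ends (colourClass c I))
    (I : Finset Q) (hI : I.card = ℓ)
    (hκ : Fintype.card Q + 2 - ℓ ≤ kappa ends (colourClass c I)) :
    ∀ e ∈ colourClass c I,
      ¬ (kappa ends (colourClass c I) < kappa ends ((colourClass c I).erase e)) := by
  intro e he hbridge
  have hce : c e ∈ I := (mem_filter.1 he).2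
  have hκ_erase : kappa ends ((colourClass c I).erase e) ≤
      kappa ends (colourClass c (I.erase (c e))) :=
    kappa_anti ends (colourClass_erase_subset c I e)
  refine hmin (ℓ - 1) (by omega) ⟨I.erase (c e), ?_, by omega⟩
  rw [card_erase_of_mem hce, hI]

theorem no_bridges_at_minimal_level {V E Q : Type*} [Fintype V] [Fintype E] [Fintype Q]
    (ends : E → Sym2 V) (hends : ∀ e, ¬ (ends e).IsDiag) (c : E → Q)
    (ℓ : ℕ) (hℓ : 1 ≤ ℓ)
    (hmin : ∀ ℓ' < ℓ, ¬ ∃ I : Finset Q, I.card = ℓ' ∧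
        Fintype.card Q + 2 - ℓ' ≤ kappa ends (colourClass c I))
    (I : Finset Q) (hI : I.card = ℓ)
    (hκ : Fintype.card Q + 2 - ℓ ≤ kappa ends (colourClass c I)) :
    ∀ e ∈ colourClass c I,
      ¬ (kappa ends (colourClass c I) < kappa ends ((colourClass c I).erase e)) :=
  no_bridges_at_minimal_level_general ends c ℓ hℓ hmin I hI hκ

end Stmt4
end

section
/- Fix an integer $k \ge 2$. With high probability, every family of pairwise vertex-disjoint cycles in $G_{k-out}(n)$ consists of at most $3n \log(2k) / \log n$ cycles, where cycles of length 2 (a pair of parallel edges, arising when two vertices choose each other) are allowed and $\log$ denotes the natural logarithm. -/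
/-!
Take `T = ⌈log n / (2 log 2k)⌉`. Pairwise disjoint cycles of length at least `T` number at
most `n / T ≤ 2n log(2k) / log n`, so a family violating the bound contains at least
`n log(2k) / log n` cycles of length less than `T`; by Markov's inequality it suffices to bound
the expected number of such cycles.

A uniform `k`-subset of an `m`-set contains a fixed `d`-set with probability at most `(k/m)^d`,
and the choices of distinct vertices are independent, so `j` prescribed choice arcs are all
present with probability at most `(k/(n-1))^j`. A cycle on a `j`-set is fixed by a cyclic order
of its vertices (at most `j!` of them) together with an orientation of each of its `j` edges as
a choice arc (`2^j`), so the expected number of cycles of length less than `T` is at most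
`∑_{j<T} C(n,j) j! (2k/(n-1))^j ≤ (4k)^T ≤ 4k n^{3/4}`, the last step using `k ≥ 2`.
The failure probability is therefore `O(log n / n^{1/4})`.
-/

open Finset

attribute [local instance] Classical.propDecidable

namespace Stmt6

/-- `f` is a valid family of choices: each vertex chooses `k` distinct other vertices. -/
def validChoices (n k : ℕ) (f : Fin n → Finset (Fin n)) : Prop :=
  ∀ i, (f i).card = k ∧ i ∉ f i

/-- The simple graph underlying `G_{k-out}` with choices `f`. -/
def underlying {n : ℕ} (f : Fin n → Finset (Fin n)) : SimpleGraph (Fin n) :=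
  SimpleGraph.fromRel (fun u v => v ∈ f u)

/-- The vertex set `C` carries a cycle of the multigraph `G_{k-out}`: either a
2-cycle formed by a pair of parallel edges, or a cycle of length at least 3 of the
underlying simple graph. -/
def carriesCycle {n : ℕ} (f : Fin n → Finset (Fin n)) (C : Finset (Fin n)) : Prop :=
  (∃ u v : Fin n, u ≠ v ∧ C = {u, v} ∧ v ∈ f u ∧ u ∈ f v) ∨
  (3 ≤ C.card ∧ ∃ (v : Fin n) (w : (underlying f).Walk v v),
      w.IsCycle ∧ w.support.toFinset = C)

/-- Every family of pairwise vertex-disjoint cycles of `G_{k-out}` has at most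
`3n·log(2k)/log n` members. -/
def fewDisjointCycles (n k : ℕ) (f : Fin n → Finset (Fin n)) : Prop :=
  ∀ 𝒞 : Finset (Finset (Fin n)),
    (∀ C ∈ 𝒞, carriesCycle f C) →
    ((𝒞 : Set (Finset (Fin n))).Pairwise fun C C' => Disjoint C C') →
    (𝒞.card : ℝ) ≤ 3 * n * Real.log (2 * k) / Real.log n

/-- The probability of `fewDisjointCycles` under the uniform random choices. -/
noncomputable def prFewDisjointCycles (n k : ℕ) : ℝ :=
  ((Finset.univ.filter (fun f : Fin n → Finset (Fin n) =>
      validChoices n k f ∧ fewDisjointCycles n k f)).card : ℝ) /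
  ((Finset.univ.filter (fun f : Fin n → Finset (Fin n) => validChoices n k f)).card : ℝ)

end Stmt6

theorem Nat.choose_sub_mul_pow_le {m k d : ℕ} (hdk : d ≤ k) (hkm : k ≤ m) :
    (m - d).choose (k - d) * m ^ d ≤ m.choose k * k ^ d := by
  induction d with
  | zero => simp
  | succ d ih =>
    have hpascal := Nat.add_one_mul_choose_eq (m - (d + 1)) (k - (d + 1))
    rw [show m - (d + 1) + 1 = m - d by omega, show k - (d + 1) + 1 = k - d by omega] at hpascal
    have hratio : (k - d) * m ≤ k * (m - d) := by
      rw [Nat.sub_mul, Nat.mul_sub]; exact Nat.sub_le_sub_left (by nlinarith) _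
    refine Nat.le_of_mul_le_mul_left ?_ (show 0 < m - d by omega)
    calc (m - d) * ((m - (d + 1)).choose (k - (d + 1)) * m ^ (d + 1))
        = (m - d).choose (k - d) * m ^ d * ((k - d) * m) := by rw [← mul_assoc, hpascal]; ring
      _ ≤ m.choose k * k ^ d * (k * (m - d)) := Nat.mul_le_mul (ih (by omega)) hratio
      _ = (m - d) * (m.choose k * k ^ (d + 1)) := by ring

theorem Nat.choose_mul_factorial_mul_pow_le {n : ℕ} (hn : 2 ≤ n) {x : ℝ} (hx : 0 ≤ x)
    (j : ℕ) :
    n.choose j * (j.factorial * (x / (n - 1)) ^ j) ≤ (2 * x) ^ j := by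
  have hn' : (2 : ℝ) ≤ n := by exact_mod_cast hn
  have hdesc : (n.choose j : ℝ) * j.factorial ≤ (n : ℝ) ^ j := by
    rw [mul_comm]
    exact_mod_cast Nat.descFactorial_eq_factorial_mul_choose n j ▸ Nat.descFactorial_le_pow n j
  have hy : 0 ≤ x / (n - 1) := div_nonneg hx (by linarith)
  have hratio : (n : ℝ) * (x / (n - 1)) ≤ 2 * x := by
    rw [mul_div_assoc', div_le_iff₀ (by linarith)]
    nlinarith
  calc n.choose j * (j.factorial * (x / (n - 1)) ^ j)
      = (n.choose j * j.factorial) * (x / (n - 1)) ^ j := by ring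
    _ ≤ (n : ℝ) ^ j * (x / (n - 1)) ^ j := mul_le_mul_of_nonneg_right hdesc (pow_nonneg hy j)
    _ ≤ (2 * x) ^ j := by
        rw [← mul_pow]
        exact pow_le_pow_left₀ (mul_nonneg (Nat.cast_nonneg _) hy) hratio j

namespace Finset
variable {α : Type*}

theorem card_filter_powersetCard_subset_mul_pow_le [DecidableEq α] {s t : Finset α} {k : ℕ}
    (hst : s ⊆ t) (hkt : k ≤ #t) :
    #{u ∈ t.powersetCard k | s ⊆ u} * #t ^ #s ≤ (#t).choose k * k ^ #s := by
  by_cases hsk : #s ≤ k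
  · rw [card_filter_powersetCard_subset s t k hst hsk]
    exact Nat.choose_sub_mul_pow_le hsk hkt
  · rw [card_eq_zero.mpr (filter_eq_empty_iff.mpr fun u hu hsu =>
      hsk ((card_le_card hsu).trans (mem_powersetCard.mp hu).2.le)), zero_mul]
    exact Nat.zero_le _

theorem card_filter_le_card_mul_le_card [Fintype α] {𝒞 : Finset (Finset α)}
    (h𝒞 : (𝒞 : Set (Finset α)).PairwiseDisjoint id) (T : ℕ) :
    #{C ∈ 𝒞 | T ≤ #C} * T ≤ Fintype.card α := by
  calc #{C ∈ 𝒞 | T ≤ #C} * T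
      ≤ ∑ C ∈ 𝒞 with T ≤ #C, #C := by
        rw [← smul_eq_mul]
        exact card_nsmul_le_sum _ _ _ fun C hC => (mem_filter.mp hC).2
    _ = #({C ∈ 𝒞 | T ≤ #C}.biUnion id) :=
        (card_biUnion (h𝒞.subset (filter_subset _ _))).symm
    _ ≤ Fintype.card α := card_le_univ _

theorem sum_card_lt_eq_sum_choose [Fintype α] {M : Type*} [AddCommMonoid M] (g : ℕ → M)
    (T : ℕ) :
    ∑ C ∈ ({C | #C < T} : Finset (Finset α)), g #C =
      ∑ j ∈ range T, (Fintype.card α).choose j • g j := by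
  rw [← sum_fiberwise_of_maps_to (g := card) (t := range T) (fun C hC => by simpa using hC)]
  refine sum_congr rfl fun j hj => ?_
  have hfiber : ({C ∈ {C | #C < T} | #C = j} : Finset (Finset α)) = powersetCard j univ := by
    ext C
    simp only [mem_filter, mem_univ, true_and, mem_powersetCard, subset_univ]
    exact ⟨fun h => h.2, fun h => ⟨h ▸ mem_range.mp hj, h⟩⟩
  rw [sum_congr rfl (fun C hC => by rw [(mem_filter.mp hC).2]), sum_const, hfiber,
    card_powersetCard, card_univ]

end Finset

namespace SimpleGraph.Walk
variable {V : Type*} {G : SimpleGraph V}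

theorem support_tail_eq_rotate_dropLast {u : V} (p : G.Walk u u) :
    p.support.tail = p.support.dropLast.rotate 1 := by
  cases p with
  | nil => rfl
  | cons h q =>
    have hq : q.support ≠ [] := q.support_ne_nil
    rw [support_cons, List.tail_cons, List.dropLast_cons_of_ne_nil hq, List.rotate_cons_succ,
      List.rotate_zero]
    nth_rw 1 [← List.dropLast_append_getLast hq, q.getLast_support]

theorem map_toProd_darts {u : V} (p : G.Walk u u) :
    p.darts.map Dart.toProd = p.support.dropLast.zip (p.support.dropLast.rotate 1) := by
  apply List.zip_of_prod
  · rw [List.map_map, ← p.map_fst_darts]; rfl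
  · rw [List.map_map, ← support_tail_eq_rotate_dropLast, ← p.map_snd_darts]; rfl

theorem IsCycle.toFinset_dropLast_support [DecidableEq V] {u : V} {p : G.Walk u u}
    (hp : p.IsCycle) : p.support.dropLast.toFinset = p.support.toFinset := by
  rw [← List.toFinset_eq_of_perm _ _ p.tail_support_perm_dropLast_support,
    ← p.cons_tail_support, List.toFinset_cons, List.tail_cons,
    insert_eq_of_mem (List.mem_toFinset.mpr (p.end_mem_tail_support hp.not_nil))]

end SimpleGraph.Walk

section CyclicArcs
variable {α : Type*} [DecidableEq α]

def cyclicArcs (l : List α) : Finset (α × α) := (l.zip (l.rotate 1)).toFinset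

theorem card_cyclicArcs {l : List α} (hl : l.Nodup) : #(cyclicArcs l) = l.length := by
  have hfst : (l.zip (l.rotate 1)).map Prod.fst = l := List.map_fst_zip (by simp)
  rw [cyclicArcs, List.toFinset_card_of_nodup (List.Nodup.of_map Prod.fst (by rwa [hfst])),
    List.length_zip, List.length_rotate, min_self]

namespace SimpleGraph.Walk.IsCycle
variable {G : SimpleGraph α} {u : α} {w : G.Walk u u}

theorem adj_and_swap_notMem_cyclicArcs (hw : w.IsCycle) {p : α × α}
    (hp : p ∈ cyclicArcs w.support.dropLast) :
    G.Adj p.1 p.2 ∧ p.swap ∉ cyclicArcs w.support.dropLast := by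
  simp only [cyclicArcs, ← w.map_toProd_darts, List.mem_toFinset, List.mem_map] at hp ⊢
  obtain ⟨d, hd, rfl⟩ := hp
  refine ⟨d.adj, fun ⟨d', hd', hswap⟩ => ?_⟩
  obtain rfl : d' = d.symm := Dart.ext _ _ hswap
  -- a cycle traverses each edge only once
  exact d.symm_ne (List.inj_on_of_nodup_map hw.edges_nodup hd' hd d.edge_symm)

theorem exists_perm_cyclicArcs (hw : w.IsCycle) :
    ∃ l ∈ w.support.toFinset.toList.permutations,
      #(cyclicArcs l) = #w.support.toFinset ∧
      ∀ p ∈ cyclicArcs l, G.Adj p.1 p.2 ∧ p.swap ∉ cyclicArcs l := by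
  have hl := hw.nodup_dropLast_support
  refine ⟨w.support.dropLast, List.mem_permutations.mpr ?_, ?_,
    fun p hp => hw.adj_and_swap_notMem_cyclicArcs hp⟩
  · exact List.perm_of_nodup_nodup_toFinset_eq hl (nodup_toList _)
      (by rw [toList_toFinset, hw.toFinset_dropLast_support])
  · rw [← hw.toFinset_dropLast_support, card_cyclicArcs hl, List.toFinset_card_of_nodup hl]

end SimpleGraph.Walk.IsCycle
end CyclicArcs

namespace Stmt6
variable {n k : ℕ}

theorem validChoices_iff_mem_piFinset {f : Fin n → Finset (Fin n)} :
    validChoices n k f ↔ f ∈ Fintype.piFinset fun i => (univ.erase i).powersetCard k := by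
  simp only [validChoices, Fintype.mem_piFinset, mem_powersetCard, subset_erase, subset_univ,
    true_and]
  exact forall_congr' fun i => and_comm

theorem card_validChoices : #{f | validChoices n k f} = (n - 1).choose k ^ n := by
  simp only [validChoices_iff_mem_piFinset, filter_mem_eq_inter, univ_inter,
    Fintype.card_piFinset, card_powersetCard, card_erase_of_mem (mem_univ _), card_univ,
    Fintype.card_fin, prod_const]

def HasArcs (f : Fin n → Finset (Fin n)) (D : Finset (Fin n × Fin n)) : Prop :=
  ∀ p ∈ D, p.2 ∈ f p.1

theorem card_validChoices_hasArcs_mul_le (hk : k ≤ n - 1) {D : Finset (Fin n × Fin n)}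
    (hD : ∀ p ∈ D, p.1 ≠ p.2) :
    #{f | validChoices n k f ∧ HasArcs f D} * (n - 1) ^ #D ≤
      #{f | validChoices n k f} * k ^ #D := by
  set out : Fin n → Finset (Fin n) := fun i => {j | (i, j) ∈ D}
  have hsum : ∑ i, #(out i) = #D := by
    simp only [out, card_filter]
    rw [← Fintype.sum_prod_type' (fun i j => if (i, j) ∈ D then 1 else 0)]
    simp
  have hset : ({f | validChoices n k f ∧ HasArcs f D} : Finset (Fin n → Finset (Fin n))) =
      Fintype.piFinset fun i => {s ∈ (univ.erase i).powersetCard k | out i ⊆ s} := by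
    ext f
    simp only [mem_filter, mem_univ, true_and, validChoices_iff_mem_piFinset,
      Fintype.mem_piFinset, HasArcs, out, subset_iff, Prod.forall, forall_and]
  have hcard : ∀ i : Fin n, #(univ.erase i) = n - 1 := fun i => by
    rw [card_erase_of_mem (mem_univ _), card_univ, Fintype.card_fin]
  calc #{f | validChoices n k f ∧ HasArcs f D} * (n - 1) ^ #D
      = ∏ i, #{s ∈ (univ.erase i).powersetCard k | out i ⊆ s} * (n - 1) ^ #(out i) := by
        rw [hset, Fintype.card_piFinset, ← hsum, ← prod_pow_eq_pow_sum, prod_mul_distrib]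
    _ ≤ ∏ i, (n - 1).choose k * k ^ #(out i) := by
        refine prod_le_prod' fun i _ => ?_
        rw [← hcard i]
        refine card_filter_powersetCard_subset_mul_pow_le (fun j hj => ?_) (hcard i ▸ hk)
        simp only [out, mem_filter, mem_univ, true_and] at hj
        exact mem_erase.mpr ⟨fun hji => hD _ hj hji.symm, mem_univ j⟩
    _ = #{f | validChoices n k f} * k ^ #D := by
        rw [prod_mul_distrib, prod_pow_eq_pow_sum, hsum, prod_const, card_univ, Fintype.card_fin,
          card_validChoices]

def HasEdges (f : Fin n → Finset (Fin n)) (P : Finset (Fin n × Fin n)) : Prop :=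
  ∀ p ∈ P, p.2 ∈ f p.1 ∨ p.1 ∈ f p.2

def orientArcs (P S : Finset (Fin n × Fin n)) : Finset (Fin n × Fin n) :=
  S ∪ (P \ S).image Prod.swap

theorem card_orientArcs {P S : Finset (Fin n × Fin n)} (hS : S ⊆ P)
    (hP : ∀ p ∈ P, p.swap ∉ P) : #(orientArcs P S) = #P := by
  rw [orientArcs, card_union_of_disjoint, card_image_of_injective _ Prod.swap_injective,
    add_comm, card_sdiff_add_card_eq_card hS]
  refine disjoint_left.mpr fun q hqS hq => ?_
  obtain ⟨p, hp, rfl⟩ := mem_image.mp hq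
  exact hP p (mem_sdiff.mp hp).1 (hS hqS)

theorem orientArcs_fst_ne_snd {P S : Finset (Fin n × Fin n)} (hS : S ⊆ P)
    (hP : ∀ p ∈ P, p.1 ≠ p.2) : ∀ q ∈ orientArcs P S, q.1 ≠ q.2 := by
  intro q hq
  rcases mem_union.mp hq with hq | hq
  · exact hP q (hS hq)
  · obtain ⟨p, hp, rfl⟩ := mem_image.mp hq
    exact (hP p (mem_sdiff.mp hp).1).symm

theorem HasEdges.hasArcs_orientArcs {f : Fin n → Finset (Fin n)} {P : Finset (Fin n × Fin n)}
    (hf : HasEdges f P) :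
    HasArcs f (orientArcs P {p ∈ P | p.2 ∈ f p.1}) := by
  intro q hq
  rcases mem_union.mp hq with hq | hq
  · exact (mem_filter.mp hq).2
  · obtain ⟨p, hp, rfl⟩ := mem_image.mp hq
    obtain ⟨hpP, hpf⟩ : p ∈ P ∧ ¬(p ∈ P ∧ p.2 ∈ f p.1) := by simpa using hp
    exact (hf p hpP).resolve_left fun h => hpf ⟨hpP, h⟩

theorem card_validChoices_hasEdges_mul_le (hk : k ≤ n - 1) {P : Finset (Fin n × Fin n)}
    (hP : ∀ p ∈ P, p.1 ≠ p.2 ∧ p.swap ∉ P) :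
    #{f | validChoices n k f ∧ HasEdges f P} * (n - 1) ^ #P ≤
      2 ^ #P * (#{f | validChoices n k f} * k ^ #P) := by
  have hcover : ({f | validChoices n k f ∧ HasEdges f P} :
        Finset (Fin n → Finset (Fin n))) ⊆
      P.powerset.biUnion fun S => {f | validChoices n k f ∧ HasArcs f (orientArcs P S)} := by
    intro f hf
    obtain ⟨hv, hcov⟩ := (mem_filter.mp hf).2
    exact mem_biUnion.mpr ⟨_, mem_powerset.mpr (filter_subset _ P),
      mem_filter.mpr ⟨mem_univ f, hv, hcov.hasArcs_orientArcs⟩⟩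
  have hforce : ∀ S ∈ P.powerset,
      #{f | validChoices n k f ∧ HasArcs f (orientArcs P S)} * (n - 1) ^ #P ≤
        #{f | validChoices n k f} * k ^ #P := fun S hS => by
    have hS := mem_powerset.mp hS
    rw [← card_orientArcs hS fun p hp => (hP p hp).2]
    exact card_validChoices_hasArcs_mul_le hk (orientArcs_fst_ne_snd hS fun p hp => (hP p hp).1)
  calc _ ≤ (∑ S ∈ P.powerset, #{f | validChoices n k f ∧ HasArcs f (orientArcs P S)}) *
          (n - 1) ^ #P := Nat.mul_le_mul_right _ ((card_le_card hcover).trans card_biUnion_le)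
    _ ≤ ∑ S ∈ P.powerset, #{f | validChoices n k f} * k ^ #P := by
        rw [sum_mul]; exact sum_le_sum hforce
    _ = 2 ^ #P * (#{f | validChoices n k f} * k ^ #P) := by
        rw [sum_const, card_powerset, smul_eq_mul]

theorem carriesCycle.two_le_card {f : Fin n → Finset (Fin n)} {C : Finset (Fin n)}
    (hC : carriesCycle f C) : 2 ≤ #C := by
  rcases hC with ⟨u, v, huv, rfl, -⟩ | ⟨h3, -⟩
  · rw [card_pair huv]
  · omega

theorem carriesCycle.hasArcs_offDiag {f : Fin n → Finset (Fin n)} {C : Finset (Fin n)}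
    (hC : carriesCycle f C) (h2 : #C = 2) : HasArcs f C.offDiag := by
  rcases hC with ⟨u, v, huv, rfl, hvu, huv'⟩ | ⟨h3, -⟩
  · rintro ⟨a, b⟩ hab
    simp only [mem_offDiag, mem_insert, mem_singleton] at hab
    obtain ⟨rfl | rfl, rfl | rfl, hne⟩ := hab <;> first | exact absurd rfl hne | assumption
  · omega

theorem carriesCycle.exists_perm_cyclicArcs {f : Fin n → Finset (Fin n)} {C : Finset (Fin n)}
    (hC : carriesCycle f C) (h3 : 3 ≤ #C) :
    ∃ l ∈ C.toList.permutations, #(cyclicArcs l) = #C ∧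
      (∀ p ∈ cyclicArcs l, p.1 ≠ p.2 ∧ p.swap ∉ cyclicArcs l) ∧
      HasEdges f (cyclicArcs l) := by
  rcases hC with ⟨u, v, -, rfl, -⟩ | ⟨-, v, w, hw, rfl⟩
  · exact absurd ((card_insert_le _ _).trans_lt (by simp) : #{u, v} < 3) (not_lt.mpr h3)
  obtain ⟨l, hl, hcard, hP⟩ := hw.exists_perm_cyclicArcs
  have hadj (p) (hp : p ∈ cyclicArcs l) : p.1 ≠ p.2 ∧ (p.2 ∈ f p.1 ∨ p.1 ∈ f p.2) := by
    simpa only [underlying, SimpleGraph.fromRel_adj] using (hP p hp).1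
  exact ⟨l, hl, hcard, fun p hp => ⟨(hadj p hp).1, (hP p hp).2⟩, fun p hp => (hadj p hp).2⟩

theorem card_carriesCycle_mul_le_of_card_eq_two (hk : k ≤ n - 1) {C : Finset (Fin n)}
    (h2 : #C = 2) :
    #{f | validChoices n k f ∧ carriesCycle f C} * (n - 1) ^ #C ≤
      #{f | validChoices n k f} * k ^ #C := by
  have hoff : #C.offDiag = #C := by rw [offDiag_card, h2]
  rw [← hoff]
  refine le_trans (Nat.mul_le_mul_right _ (card_le_card fun f hf => ?_))
    (card_validChoices_hasArcs_mul_le hk fun p hp => (mem_offDiag.mp hp).2.2)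
  obtain ⟨hv, hC⟩ := (mem_filter.mp hf).2
  exact mem_filter.mpr ⟨mem_univ f, hv, hC.hasArcs_offDiag h2⟩

theorem card_carriesCycle_mul_le_of_three_le_card (hk : k ≤ n - 1) {C : Finset (Fin n)}
    (h3 : 3 ≤ #C) :
    #{f | validChoices n k f ∧ carriesCycle f C} * (n - 1) ^ #C ≤
      (#C).factorial * (2 ^ #C * (#{f | validChoices n k f} * k ^ #C)) := by
  set good : Finset (Finset (Fin n × Fin n)) :=
    (C.toList.permutations.toFinset.image cyclicArcs).filter
      fun P => #P = #C ∧ ∀ p ∈ P, p.1 ≠ p.2 ∧ p.swap ∉ P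
  have hgood : #good ≤ (#C).factorial := calc
    #good ≤ #C.toList.permutations.toFinset := (card_filter_le _ _).trans card_image_le
    _ ≤ (#C).factorial := by
      simpa [List.length_permutations] using List.toFinset_card_le C.toList.permutations
  have hcover : ({f | validChoices n k f ∧ carriesCycle f C} :
        Finset (Fin n → Finset (Fin n))) ⊆
      good.biUnion fun P => {f | validChoices n k f ∧ HasEdges f P} := by
    intro f hf
    obtain ⟨hv, hC⟩ := (mem_filter.mp hf).2
    obtain ⟨l, hl, hcard, hP, hedges⟩ := hC.exists_perm_cyclicArcs h3
    exact mem_biUnion.mpr ⟨cyclicArcs l,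
      mem_filter.mpr ⟨mem_image_of_mem _ (List.mem_toFinset.mpr hl), hcard, hP⟩,
      mem_filter.mpr ⟨mem_univ f, hv, hedges⟩⟩
  have hbound : ∀ P ∈ good,
      #{f | validChoices n k f ∧ HasEdges f P} * (n - 1) ^ #C ≤
        2 ^ #C * (#{f | validChoices n k f} * k ^ #C) := fun P hP => by
    obtain ⟨-, hcard, hP⟩ := mem_filter.mp hP
    rw [← hcard]
    exact card_validChoices_hasEdges_mul_le hk hP
  calc _ ≤ (∑ P ∈ good, #{f | validChoices n k f ∧ HasEdges f P}) *
          (n - 1) ^ #C := Nat.mul_le_mul_right _ ((card_le_card hcover).trans card_biUnion_le)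
    _ ≤ #good * (2 ^ #C * (#{f | validChoices n k f} * k ^ #C)) := by
        rw [sum_mul, ← smul_eq_mul]; exact sum_le_card_nsmul _ _ _ hbound
    _ ≤ _ := Nat.mul_le_mul_right _ hgood

theorem card_carriesCycle_mul_le (hk : k ≤ n - 1) (C : Finset (Fin n)) :
    #{f | validChoices n k f ∧ carriesCycle f C} * (n - 1) ^ #C ≤
      (#C).factorial * (2 ^ #C * (#{f | validChoices n k f} * k ^ #C)) := by
  obtain h | h | h : #C < 2 ∨ #C = 2 ∨ 3 ≤ #C := by omega
  · rw [card_eq_zero.mpr (filter_eq_empty_iff.mpr fun f _ hf => (hf.2.two_le_card.not_gt h)),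
      zero_mul]
    exact Nat.zero_le _
  · refine (card_carriesCycle_mul_le_of_card_eq_two hk h).trans ?_
    exact Nat.le_mul_of_pos_left _ (Nat.factorial_pos _) |>.trans
      (Nat.mul_le_mul_left _ (Nat.le_mul_of_pos_left _ (by positivity)))
  · exact card_carriesCycle_mul_le_of_three_le_card hk h

theorem card_carriesCycle_le (hkn : k ≤ n - 1) (hn : 2 ≤ n) (C : Finset (Fin n)) :
    (#{f | validChoices n k f ∧ carriesCycle f C} : ℝ) ≤
      #{f | validChoices n k f} * ((#C).factorial * (2 * k / (n - 1)) ^ #C) := by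
  have h : (#{f | validChoices n k f ∧ carriesCycle f C} : ℝ) * ((n - 1 : ℕ) : ℝ) ^ #C ≤
      (#C).factorial * (2 ^ #C * ((#{f | validChoices n k f} : ℝ) * k ^ #C)) := by
    exact_mod_cast card_carriesCycle_mul_le hkn C
  have hn1 : (0 : ℝ) < n - 1 := by
    linarith [show (2 : ℝ) ≤ n by exact_mod_cast hn]
  rw [Nat.cast_pred (by omega), ← le_div_iff₀ (pow_pos hn1 _)] at h
  exact h.trans_eq (by rw [div_pow, mul_pow]; ring)

noncomputable def shortCycles (f : Fin n → Finset (Fin n)) (T : ℕ) : Finset (Finset (Fin n)) :=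
  {C | #C < T ∧ carriesCycle f C}

theorem sum_card_shortCycles_eq (T : ℕ) :
    ∑ f ∈ ({f | validChoices n k f} : Finset (Fin n → Finset (Fin n))), #(shortCycles f T) =
      ∑ C ∈ ({C | #C < T} : Finset (Finset (Fin n))),
        #{f | validChoices n k f ∧ carriesCycle f C} := by
  have h := sum_card_bipartiteAbove_eq_sum_card_bipartiteBelow (fun f C => carriesCycle f C)
    (s := ({f | validChoices n k f} : Finset (Fin n → Finset (Fin n))))
    (t := ({C | #C < T} : Finset (Finset (Fin n))))
  simpa only [bipartiteAbove, bipartiteBelow, filter_filter, shortCycles] using h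

theorem sum_card_shortCycles_le (hk : 1 ≤ k) (hkn : k ≤ n - 1) (T : ℕ) :
    ∑ f ∈ ({f | validChoices n k f} : Finset (Fin n → Finset (Fin n))),
        (#(shortCycles f T) : ℝ) ≤ (4 * k) ^ T * #{f | validChoices n k f} := by
  set V : ℝ := ((#{f | validChoices n k f} : ℕ) : ℝ)
  calc ∑ f ∈ ({f | validChoices n k f} : Finset (Fin n → Finset (Fin n))),
        (#(shortCycles f T) : ℝ)
      = ∑ C ∈ ({C | #C < T} : Finset (Finset (Fin n))),
          (#{f | validChoices n k f ∧ carriesCycle f C} : ℝ) := by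
        exact_mod_cast sum_card_shortCycles_eq T
    _ ≤ ∑ C ∈ ({C | #C < T} : Finset (Finset (Fin n))),
          V * ((#C).factorial * (2 * k / (n - 1)) ^ #C) :=
        sum_le_sum fun C _ => card_carriesCycle_le hkn (by omega) C
    _ = V * ∑ j ∈ range T, (n.choose j : ℝ) * (j.factorial * (2 * k / (n - 1)) ^ j) := by
        rw [sum_card_lt_eq_sum_choose fun j => V * (j.factorial * (2 * k / (n - 1)) ^ j),
          Fintype.card_fin, mul_sum]
        exact sum_congr rfl fun j _ => by rw [nsmul_eq_mul]; ring
    _ ≤ V * ∑ j ∈ range T, (4 * k : ℝ) ^ j := by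
        gcongr with j
        rw [show (4 * k : ℝ) = 2 * (2 * k) by ring]
        exact Nat.choose_mul_factorial_mul_pow_le (by omega) (by positivity) j
    _ ≤ (4 * k) ^ T * V := by
        rw [mul_comm]
        refine mul_le_mul_of_nonneg_right ?_ (Nat.cast_nonneg _)
        exact_mod_cast (Nat.geomSum_lt (by omega) fun j hj => mem_range.mp hj).le

theorem card_le_card_shortCycles_add {f : Fin n → Finset (Fin n)} {𝒞 : Finset (Finset (Fin n))}
    (hcyc : ∀ C ∈ 𝒞, carriesCycle f C)
    (hdisj : (𝒞 : Set (Finset (Fin n))).Pairwise fun C C' => Disjoint C C') {T : ℕ}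
    (hT : 0 < T) : (#𝒞 : ℝ) ≤ #(shortCycles f T) + n / T := by
  have hsplit := card_filter_add_card_filter_not (s := 𝒞) (p := fun C => T ≤ #C)
  have hshort : #{C ∈ 𝒞 | ¬T ≤ #C} ≤ #(shortCycles f T) := card_le_card fun C hC => by
    obtain ⟨hC, hCT⟩ := mem_filter.mp hC
    exact mem_filter.mpr ⟨mem_univ C, not_le.mp hCT, hcyc C hC⟩
  have hlong : (#{C ∈ 𝒞 | T ≤ #C} : ℝ) ≤ n / T := by
    rw [le_div_iff₀ (by exact_mod_cast hT)]
    exact_mod_cast Fintype.card_fin n ▸ card_filter_le_card_mul_le_card hdisj T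
  rw [← hsplit, Nat.cast_add, add_comm]
  exact add_le_add (by exact_mod_cast hshort) hlong

theorem le_card_shortCycles_of_not_fewDisjointCycles (hn : 2 ≤ n) (hk : 1 ≤ k)
    {f : Fin n → Finset (Fin n)} (hf : ¬fewDisjointCycles n k f) {T : ℕ}
    (hT : Real.log n / (2 * Real.log (2 * k)) ≤ T) :
    n * Real.log (2 * k) / Real.log n ≤ #(shortCycles f T) := by
  have hlogn : 0 < Real.log n := Real.log_pos (by exact_mod_cast hn)
  have hlogk : 0 < Real.log (2 * k) := Real.log_pos (by norm_cast; omega)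
  have hT0 : (0 : ℝ) < T := lt_of_lt_of_le (by positivity) hT
  simp only [fewDisjointCycles, not_forall, not_le] at hf
  obtain ⟨𝒞, hcyc, hdisj, hmany⟩ := hf
  have hlong : (n : ℝ) / T ≤ 2 * n * Real.log (2 * k) / Real.log n := by
    calc (n : ℝ) / T ≤ n / (Real.log n / (2 * Real.log (2 * k))) :=
          div_le_div_of_nonneg_left (by positivity) (by positivity) hT
      _ = 2 * n * Real.log (2 * k) / Real.log n := by field_simp
  have := card_le_card_shortCycles_add hcyc hdisj (by exact_mod_cast hT0)
  have hsplit : 3 * n * Real.log (2 * k) / Real.log n =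
      n * Real.log (2 * k) / Real.log n + 2 * n * Real.log (2 * k) / Real.log n := by ring
  linarith

theorem card_not_fewDisjointCycles_mul_le (hk : 1 ≤ k) (hkn : k ≤ n - 1) {T : ℕ}
    (hT : Real.log n / (2 * Real.log (2 * k)) ≤ T) :
    (#{f | validChoices n k f ∧ ¬fewDisjointCycles n k f} : ℝ) *
        (n * Real.log (2 * k) / Real.log n) ≤
      (4 * k) ^ T * #{f | validChoices n k f} := by
  calc (#{f | validChoices n k f ∧ ¬fewDisjointCycles n k f} : ℝ) *
        (n * Real.log (2 * k) / Real.log n)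
      = ∑ f ∈ ({f | validChoices n k f ∧ ¬fewDisjointCycles n k f} : Finset _),
          (n * Real.log (2 * k) / Real.log n) := by rw [sum_const, nsmul_eq_mul]
    _ ≤ ∑ f ∈ ({f | validChoices n k f ∧ ¬fewDisjointCycles n k f} : Finset _),
          (#(shortCycles f T) : ℝ) := sum_le_sum fun f hf =>
        le_card_shortCycles_of_not_fewDisjointCycles (by omega) hk (mem_filter.mp hf).2.2 hT
    _ ≤ ∑ f ∈ ({f | validChoices n k f} : Finset (Fin n → Finset (Fin n))),
          (#(shortCycles f T) : ℝ) :=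
        sum_le_sum_of_subset_of_nonneg (monotone_filter_right _ fun _ _ hf => hf.1)
          fun _ _ _ => Nat.cast_nonneg _
    _ ≤ (4 * k) ^ T * #{f | validChoices n k f} := sum_card_shortCycles_le hk hkn T

theorem four_mul_pow_ceil_le (hk : 2 ≤ k) (hn : 1 ≤ n) :
    (4 * k : ℝ) ^ ⌈Real.log n / (2 * Real.log (2 * k))⌉₊ ≤
      4 * k * (n : ℝ) ^ (3 / 4 : ℝ) := by
  set x := Real.log n / (2 * Real.log (2 * k))
  have h2k : (4 : ℝ) ≤ 2 * k := by exact_mod_cast (show 4 ≤ 2 * k by omega)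
  have hlogk : 0 < Real.log (2 * k) := Real.log_pos (by linarith)
  have hx : 0 ≤ x := div_nonneg (Real.log_natCast_nonneg n) (by positivity)
  -- `4k ≤ (2k)^(3/2)` because `k ≥ 2`
  have hlog4k : Real.log (4 * k) ≤ 3 / 2 * Real.log (2 * k) := by
    have hlog4 : 2 * Real.log 2 ≤ Real.log (2 * k) := by
      rw [← Real.log_rpow two_pos]; exact Real.log_le_log (by norm_num) (by norm_num; linarith)
    rw [show (4 : ℝ) * k = 2 * (2 * k) by ring, Real.log_mul two_ne_zero (by positivity)]
    linarith
  calc (4 * k : ℝ) ^ ⌈x⌉₊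
      = (4 * k : ℝ) ^ (⌈x⌉₊ : ℝ) := (Real.rpow_natCast _ _).symm
    _ ≤ (4 * k : ℝ) ^ (x + 1) :=
        Real.rpow_le_rpow_of_exponent_le (by linarith) (Nat.ceil_lt_add_one hx).le
    _ = 4 * k * Real.exp (Real.log (4 * k) * x) := by
        rw [Real.rpow_add_one (by positivity), Real.rpow_def_of_pos (by positivity), mul_comm]
    _ ≤ 4 * k * Real.exp (Real.log n * (3 / 4)) := by
        refine mul_le_mul_of_nonneg_left (Real.exp_le_exp.mpr ?_) (by positivity)
        calc Real.log (4 * k) * x ≤ 3 / 2 * Real.log (2 * k) * x := by gcongr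
          _ = Real.log n * (3 / 4) := by simp only [x]; field_simp; ring
    _ = 4 * k * (n : ℝ) ^ (3 / 4 : ℝ) := by
        rw [Real.rpow_def_of_pos (by exact_mod_cast hn)]

theorem prFewDisjointCycles_eq (hV : 0 < #{f | validChoices n k f}) :
    prFewDisjointCycles n k =
      1 - (#{f | validChoices n k f ∧ ¬fewDisjointCycles n k f} : ℝ) /
        #{f | validChoices n k f} := by
  have hsplit : #{f | validChoices n k f ∧ fewDisjointCycles n k f} +
      #{f | validChoices n k f ∧ ¬fewDisjointCycles n k f} = #{f | validChoices n k f} := by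
    rw [← filter_filter, ← filter_filter, card_filter_add_card_filter_not]
  rw [prFewDisjointCycles, eq_sub_iff_add_eq, ← add_div, div_eq_one_iff_eq (by positivity)]
  exact_mod_cast hsplit

theorem one_sub_prFewDisjointCycles_le (hk : 2 ≤ k) (hkn : k < n) :
    1 - prFewDisjointCycles n k ≤
      4 * k / Real.log (2 * k) * (Real.log n / (n : ℝ) ^ (1 / 4 : ℝ)) := by
  have hV : 0 < #{f | validChoices n k f} := by
    rw [card_validChoices]; exact pow_pos (Nat.choose_pos (by omega)) n
  have hn : (0 : ℝ) < n := by exact_mod_cast (show 0 < n by omega)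
  have hlogn : 0 < Real.log n := Real.log_pos (by exact_mod_cast (show 1 < n by omega))
  have hlogk : 0 < Real.log (2 * k) := Real.log_pos (by norm_cast; omega)
  have hmarkov := card_not_fewDisjointCycles_mul_le (n := n) (k := k) (by omega) (by omega)
    (Nat.le_ceil _)
  have hpow := four_mul_pow_ceil_le hk (show 1 ≤ n by omega)
  have hpow34 : (n : ℝ) ^ (3 / 4 : ℝ) = n / (n : ℝ) ^ (1 / 4 : ℝ) := by
    rw [eq_div_iff (by positivity), ← Real.rpow_add hn]; norm_num
  rw [prFewDisjointCycles_eq hV, sub_sub_cancel, div_le_iff₀ (by exact_mod_cast hV)]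
  refine le_of_mul_le_mul_right (hmarkov.trans ?_) (show 0 < n * Real.log (2 * k) / Real.log n
    by positivity)
  calc (4 * k : ℝ) ^ _ * #{f | validChoices n k f}
      ≤ 4 * k * (n : ℝ) ^ (3 / 4 : ℝ) * #{f | validChoices n k f} := by gcongr
    _ = _ := by
        rw [hpow34]
        generalize Real.log (2 * k) = L at hlogk ⊢
        field_simp

theorem prFewDisjointCycles_le_one : prFewDisjointCycles n k ≤ 1 := by
  refine div_le_one_of_le₀ ?_ (Nat.cast_nonneg _)
  exact_mod_cast card_le_card (monotone_filter_right univ fun _ _ (hf : _ ∧ _) => hf.1)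

theorem few_disjoint_cycles_whp (k : ℕ) (hk : 2 ≤ k) :
    Filter.Tendsto (fun n => prFewDisjointCycles n k) Filter.atTop (nhds 1) := by
  have hbound : Filter.Tendsto
      (fun n : ℕ => 4 * k / Real.log (2 * k) * (Real.log n / (n : ℝ) ^ (1 / 4 : ℝ)))
      Filter.atTop (nhds 0) := by
    simpa using ((isLittleO_log_rpow_atTop (by norm_num)).tendsto_div_nhds_zero.comp
      tendsto_natCast_atTop_atTop).const_mul (4 * k / Real.log (2 * k))
  refine tendsto_of_tendsto_of_tendsto_of_le_of_le' (by simpa using hbound.const_sub 1)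
    tendsto_const_nhds ?_ (Filter.Eventually.of_forall fun n => prFewDisjointCycles_le_one)
  filter_upwards [Filter.eventually_gt_atTop k] with n hn
  linarith [one_sub_prFewDisjointCycles_le hk hn]

end Stmt6
end

section
/- Let $M_0$ be the fixed perfect matching $\{\{2i-1, 2i\} : 1 \le i \le n\}$ of $[2n]$ and let $M$ be a uniformly random perfect matching of $[2n]$. Then with high probability (as $n \to \infty$), the simple graph on $[2n]$ in which $u \sim v$ iff $u \ne v$ and ($\{u,v\} \in M_0$ or $\{u,v\} \in M$) has at most $(\log n)^2$ connected components. -/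
/-!
Statement 11: Let `M₀` be the fixed perfect matching `{{2i-1, 2i} : 1 ≤ i ≤ n}` of
`[2n]` and let `M` be a uniformly random perfect matching of `[2n]`. Then w.h.p.
(as `n → ∞`) the union graph `M₀ ∪ M` has at most `(log n)²` connected components.

We index `[2n]` by `Fin (2n)` (0-based), so `M₀` pairs `2i` with `2i+1`.
-/

open Finset

attribute [local instance] Classical.propDecidable

namespace Stmt11

/-- The fixed perfect matching pairing `2i` with `2i+1`, as a fixed-point-free
involution of `Fin (2n)`. -/
def m0 (n : ℕ) (x : Fin (2 * n)) : Fin (2 * n) :=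
  ⟨if x.val % 2 = 0 then x.val + 1 else x.val - 1, by
    have := x.isLt; split <;> omega⟩

/-- `σ` is a perfect matching of `Fin (2n)`: a fixed-point-free involution. -/
def isPM (n : ℕ) (σ : Fin (2 * n) → Fin (2 * n)) : Prop :=
  (∀ x, σ (σ x) = x) ∧ ∀ x, σ x ≠ x

/-- The simple graph on `Fin (2n)` in which `u ∼ v` iff `u ≠ v` and `{u,v}` is a pair
of `M₀` or of the matching `σ`. -/
def unionGraph (n : ℕ) (σ : Fin (2 * n) → Fin (2 * n)) : SimpleGraph (Fin (2 * n)) :=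
  SimpleGraph.fromRel (fun u v => m0 n u = v ∨ σ u = v)

/-- The probability that `M₀ ∪ M` has at most `(log n)²` connected components, for a
uniformly random perfect matching `M` of `Fin (2n)`. -/
noncomputable def prFewComponents (n : ℕ) : ℝ :=
  ((Finset.univ.filter (fun σ : Fin (2 * n) → Fin (2 * n) => isPM n σ ∧
      (Nat.card (unionGraph n σ).ConnectedComponent : ℝ) ≤ (Real.log n) ^ 2)).card : ℝ) /
  ((Finset.univ.filter (fun σ : Fin (2 * n) → Fin (2 * n) => isPM n σ)).card : ℝ)

/-!
Split off the pair `{2n, 2n+1}` of `M₀`. Conjugating by a transposition, a uniform matching of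
`[2n+2]` corresponds to a uniform matching `M'` of `[2n]` together with an independent uniform
partner `u ≠ 2n` of `2n`. If `u = 2n+1` the pair is a new component; otherwise it is spliced into
the edge of `M'` at `u` and the number of components does not change. Hence the expected number
of components is `∑_{k<n} 1/(2k+1) ≤ 1 + log n`, and Markov's inequality bounds the probability
of more than `(log n)²` components by `2 / log n`.
-/

section Graph

open SimpleGraph

variable {V W : Type*} {G : SimpleGraph V}

theorem _root_.SimpleGraph.Reachable.map_of_adj {G' : SimpleGraph W} (g : V → W)
    (hg : ∀ x y, G.Adj x y → G'.Reachable (g x) (g y)) {x y : V} (h : G.Reachable x y) :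
    G'.Reachable (g x) (g y) := by
  rw [reachable_iff_reflTransGen] at h ⊢
  exact h.lift' g fun a b hab => (reachable_iff_reflTransGen _ _).1 (hg a b hab)

theorem _root_.SimpleGraph.Reachable.eq_of_adj {β : Type*} (f : V → β)
    (hf : ∀ x y, G.Adj x y → f x = f y) {x y : V} (h : G.Reachable x y) : f x = f y :=
  reachable_bot.1 (h.map_of_adj (G' := ⊥) f fun a b hab => reachable_bot.2 (hf a b hab))

theorem _root_.SimpleGraph.card_connectedComponent_eq_of_section {β : Type*} (f : V → β)
    (g : β → V) (hf : ∀ x y, G.Adj x y → f x = f y) (hfg : ∀ b, f (g b) = b)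
    (hgf : ∀ v, G.Reachable (g (f v)) v) :
    Nat.card G.ConnectedComponent = Nat.card β :=
  Nat.card_congr
    { toFun := Quot.lift f fun _ _ h => h.eq_of_adj f hf
      invFun := fun b => G.connectedComponentMk (g b)
      left_inv := fun c => c.ind fun v => ConnectedComponent.sound (hgf v)
      right_inv := hfg }

end Graph

open Equiv

section Involution

variable {α : Type*} [DecidableEq α]

theorem _root_.Function.Involutive.swap_conj {τ : α → α} (hτ : Function.Involutive τ)
    (a b : α) : Function.Involutive (swap a b ∘ τ ∘ swap a b) := fun x => by
  simp [hτ _]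

theorem swap_conj_ne_self {τ : α → α} (hτ : ∀ x, τ x ≠ x) (a b x : α) :
    (swap a b ∘ τ ∘ swap a b) x ≠ x := fun h =>
  hτ (swap a b x) (by simpa [swap_apply_eq_iff] using h)

theorem swap_conj_apply_of_apply_eq {τ : α → α} {a b u : α} (hτ : τ a = b) (hab : a ≠ b)
    (hau : a ≠ u) : (swap b u ∘ τ ∘ swap b u) a = u := by
  simp [swap_apply_of_ne_of_ne hab hau, hτ]

/-- The bijection is `σ ↦ (s ∘ σ ∘ s, σ a)`, where `s` is the transposition of `b` and `σ a`. -/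
theorem sum_fixedPointFree_involutions_eq [Fintype α] {M : Type*} [AddCommMonoid M]
    {S : Finset (α → α)} (hS : ∀ σ, σ ∈ S ↔ Function.Involutive σ ∧ ∀ x, σ x ≠ x)
    {a b : α} (hab : a ≠ b) (F : (α → α) → M) :
    ∑ σ ∈ S, F σ =
      ∑ τ ∈ S.filter (fun τ => τ a = b), ∑ u ∈ univ.erase a, F (swap b u ∘ τ ∘ swap b u) := by
  rw [← Finset.sum_product']
  refine Finset.sum_nbij' (fun σ => (swap b (σ a) ∘ σ ∘ swap b (σ a), σ a))
    (fun p => swap b p.2 ∘ p.1 ∘ swap b p.2) ?_ ?_ ?_ ?_ ?_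
  · simp only [Finset.mem_filter, Finset.mem_product, Finset.mem_erase, Finset.mem_univ,
      and_true, hS]
    rintro σ ⟨hinv, hfix⟩
    refine ⟨⟨⟨hinv.swap_conj _ _, swap_conj_ne_self hfix _ _⟩, ?_⟩, hfix a⟩
    simp [swap_apply_of_ne_of_ne hab (hfix a).symm]
  · simp only [Finset.mem_filter, Finset.mem_product, hS]
    rintro ⟨τ, u⟩ ⟨⟨⟨hinv, hfix⟩, -⟩, -⟩
    exact ⟨hinv.swap_conj _ _, swap_conj_ne_self hfix _ _⟩
  · intro σ _
    funext x
    simp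
  · simp only [Finset.mem_product, Finset.mem_filter, Finset.mem_erase]
    rintro ⟨τ, u⟩ ⟨⟨-, hτ⟩, hu, -⟩
    rw [swap_conj_apply_of_apply_eq hτ hab hu.symm]
    ext x <;> simp
  · intro σ _
    congr 1
    funext x
    simp

end Involution

section Vertices

variable {n : ℕ}

lemma val_m0 (x : Fin (2 * n)) :
    (m0 n x : ℕ) = if (x : ℕ) % 2 = 0 then (x : ℕ) + 1 else (x : ℕ) - 1 := rfl

def low (n : ℕ) (x : Fin (2 * n)) : Fin (2 * (n + 1)) := ⟨x, by omega⟩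

def top₀ (n : ℕ) : Fin (2 * (n + 1)) := ⟨2 * n, by omega⟩

def top₁ (n : ℕ) : Fin (2 * (n + 1)) := ⟨2 * n + 1, by omega⟩

@[simp] lemma val_low (x : Fin (2 * n)) : (low n x : ℕ) = x := rfl

lemma low_injective : Function.Injective (low n) := fun _ _ h => by
  simpa [Fin.ext_iff] using h

@[simp] lemma low_inj {x y : Fin (2 * n)} : low n x = low n y ↔ x = y := low_injective.eq_iff

@[simp] lemma low_ne_top₀ (x : Fin (2 * n)) : low n x ≠ top₀ n := by
  simp [Fin.ext_iff, top₀]; omega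

@[simp] lemma low_ne_top₁ (x : Fin (2 * n)) : low n x ≠ top₁ n := by
  simp [Fin.ext_iff, top₁]; omega

@[simp] lemma top₀_ne_top₁ : top₀ n ≠ top₁ n := by simp [Fin.ext_iff, top₀, top₁]

@[simp] lemma top₁_ne_top₀ : top₁ n ≠ top₀ n := top₀_ne_top₁.symm

lemma low_or_top (v : Fin (2 * (n + 1))) : (∃ x, v = low n x) ∨ v = top₀ n ∨ v = top₁ n := by
  by_cases h : (v : ℕ) < 2 * n
  · exact .inl ⟨⟨v, h⟩, rfl⟩
  · right; simp only [Fin.ext_iff, top₀, top₁]; omega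

@[simp] lemma m0_low (x : Fin (2 * n)) : m0 (n + 1) (low n x) = low n (m0 n x) :=
  Fin.ext rfl

@[simp] lemma m0_top₀ : m0 (n + 1) (top₀ n) = top₁ n := by ext; simp [val_m0, top₀, top₁]

@[simp] lemma m0_top₁ : m0 (n + 1) (top₁ n) = top₀ n := by
  ext; simp [val_m0, top₀, top₁]

def lowerOpt (v : Fin (2 * (n + 1))) : Option (Fin (2 * n)) :=
  if h : (v : ℕ) < 2 * n then some ⟨v, h⟩ else none

@[simp] lemma lowerOpt_low (x : Fin (2 * n)) : lowerOpt (low n x) = some x := by simp [lowerOpt]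

@[simp] lemma lowerOpt_top₀ : lowerOpt (top₀ n) = none := by simp [lowerOpt, top₀]

@[simp] lemma lowerOpt_top₁ : lowerOpt (top₁ n) = none := by simp [lowerOpt, top₁]

end Vertices

section Extend

variable {n : ℕ}

def extend (σ : Fin (2 * n) → Fin (2 * n)) (v : Fin (2 * (n + 1))) : Fin (2 * (n + 1)) :=
  if h : (v : ℕ) < 2 * n then low n (σ ⟨v, h⟩) else m0 (n + 1) v

def restrict (τ : Fin (2 * (n + 1)) → Fin (2 * (n + 1))) (x : Fin (2 * n)) : Fin (2 * n) :=
  (lowerOpt (τ (low n x))).getD x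

variable (σ : Fin (2 * n) → Fin (2 * n))

@[simp] lemma extend_low (x : Fin (2 * n)) : extend σ (low n x) = low n (σ x) := by
  simp [extend]

@[simp] lemma extend_top₀ : extend σ (top₀ n) = top₁ n := by
  rw [extend, dif_neg (by simp [top₀]), m0_top₀]

@[simp] lemma extend_top₁ : extend σ (top₁ n) = top₀ n := by
  rw [extend, dif_neg (by simp [top₁]), m0_top₁]

lemma restrict_extend : restrict (extend σ) = σ := by
  funext x; simp [restrict]

lemma isPM_extend (hσ : isPM n σ) : isPM (n + 1) (extend σ) := by
  constructor <;> intro v <;> rcases low_or_top v with ⟨x, rfl⟩ | rfl | rfl <;>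
    simp [hσ.1, hσ.2]

variable {τ : Fin (2 * (n + 1)) → Fin (2 * (n + 1))} (hτ : Function.Involutive τ)
  (htop : τ (top₀ n) = top₁ n)
include hτ htop

lemma apply_low_eq_low_restrict (x : Fin (2 * n)) : τ (low n x) = low n (restrict τ x) := by
  rcases low_or_top (τ (low n x)) with ⟨y, hy⟩ | hy | hy
  · simp [restrict, hy]
  · have := congrArg τ hy
    rw [hτ, htop] at this
    exact absurd this (low_ne_top₁ x)
  · have := congrArg τ hy
    rw [hτ, ← htop, hτ] at this
    exact absurd this (low_ne_top₀ x)

lemma extend_restrict : extend (restrict τ) = τ := by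
  funext v
  rcases low_or_top v with ⟨x, rfl⟩ | rfl | rfl
  · rw [extend_low, apply_low_eq_low_restrict hτ htop]
  · rw [extend_top₀, htop]
  · rw [extend_top₁, ← htop, hτ]

lemma isPM_restrict (hfix : ∀ v, τ v ≠ v) : isPM n (restrict τ) := by
  have key := apply_low_eq_low_restrict hτ htop
  refine ⟨fun x => low_injective ?_, fun x h => hfix (low n x) ?_⟩
  · rw [← key, ← key, hτ]
  · rw [key, h]

end Extend

section Recursion

variable {n : ℕ}

noncomputable def perfectMatchings (n : ℕ) : Finset (Fin (2 * n) → Fin (2 * n)) :=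
  univ.filter (isPM n)

@[simp] lemma mem_perfectMatchings {σ : Fin (2 * n) → Fin (2 * n)} :
    σ ∈ perfectMatchings n ↔ isPM n σ := by
  simp [perfectMatchings]

/-- Pairs `2n` with `u` and `2n+1` with the former partner of `u` (with `2n` when `u = 2n+1`). -/
def insertTop (σ : Fin (2 * n) → Fin (2 * n)) (u : Fin (2 * (n + 1))) :
    Fin (2 * (n + 1)) → Fin (2 * (n + 1)) :=
  swap (top₁ n) u ∘ extend σ ∘ swap (top₁ n) u

lemma sum_perfectMatchings_succ {M : Type*} [AddCommMonoid M]
    (F : (Fin (2 * (n + 1)) → Fin (2 * (n + 1))) → M) :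
    ∑ τ ∈ perfectMatchings (n + 1), F τ =
      ∑ σ ∈ perfectMatchings n, ∑ u ∈ univ.erase (top₀ n), F (insertTop σ u) := by
  rw [sum_fixedPointFree_involutions_eq (fun _ => mem_perfectMatchings) top₀_ne_top₁ F]
  refine Finset.sum_nbij' restrict extend ?_ ?_ ?_ ?_ ?_
  · simp only [Finset.mem_filter, mem_perfectMatchings]
    rintro τ ⟨⟨hinv, hfix⟩, htop⟩
    exact isPM_restrict hinv htop hfix
  · simp only [Finset.mem_filter, mem_perfectMatchings]
    intro σ hσ
    exact ⟨isPM_extend σ hσ, extend_top₀ σ⟩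
  · simp only [Finset.mem_filter, mem_perfectMatchings]
    rintro τ ⟨⟨hinv, -⟩, htop⟩
    exact extend_restrict hinv htop
  · intro σ _
    exact restrict_extend σ
  · simp only [Finset.mem_filter, mem_perfectMatchings]
    rintro τ ⟨⟨hinv, -⟩, htop⟩
    simp only [insertTop, extend_restrict hinv htop]

end Recursion

section Components

open SimpleGraph

variable {n : ℕ} (σ : Fin (2 * n) → Fin (2 * n))

noncomputable def numComponents (n : ℕ) (σ : Fin (2 * n) → Fin (2 * n)) : ℕ :=
  Nat.card (unionGraph n σ).ConnectedComponent

lemma unionGraph_reachable_m0 (v : Fin (2 * n)) : (unionGraph n σ).Reachable v (m0 n v) := by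
  by_cases h : v = m0 n v
  · rw [← h]
  · exact Adj.reachable ((fromRel_adj _ _ _).2 ⟨h, .inl (.inl rfl)⟩)

lemma unionGraph_reachable_apply (v : Fin (2 * n)) : (unionGraph n σ).Reachable v (σ v) := by
  by_cases h : v = σ v
  · rw [← h]
  · exact Adj.reachable ((fromRel_adj _ _ _).2 ⟨h, .inl (.inr rfl)⟩)

lemma unionGraph_reachable_map {W : Type*} {G : SimpleGraph W} {g : Fin (2 * n) → W}
    (h0 : ∀ v, G.Reachable (g v) (g (m0 n v))) (h1 : ∀ v, G.Reachable (g v) (g (σ v)))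
    {x y : Fin (2 * n)} (h : (unionGraph n σ).Reachable x y) : G.Reachable (g x) (g y) :=
  h.map_of_adj g fun x y hxy => by
    rcases ((fromRel_adj _ _ _).1 hxy).2 with (rfl | rfl) | (rfl | rfl)
    exacts [h0 x, h1 x, (h0 y).symm, (h1 y).symm]

lemma unionGraph_eq_of_adj {β : Type*} {f : Fin (2 * n) → β} (h0 : ∀ v, f (m0 n v) = f v)
    (h1 : ∀ v, f (σ v) = f v) : ∀ x y, (unionGraph n σ).Adj x y → f x = f y := fun x y h => by
  rcases ((fromRel_adj _ _ _).1 h).2 with (rfl | rfl) | (rfl | rfl)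
  exacts [(h0 x).symm, (h1 x).symm, h0 y, h1 y]

lemma connectedComponentMk_m0 (x : Fin (2 * n)) :
    (unionGraph n σ).connectedComponentMk (m0 n x) = (unionGraph n σ).connectedComponentMk x :=
  ConnectedComponent.sound (unionGraph_reachable_m0 σ x).symm

lemma connectedComponentMk_apply (x : Fin (2 * n)) :
    (unionGraph n σ).connectedComponentMk (σ x) = (unionGraph n σ).connectedComponentMk x :=
  ConnectedComponent.sound (unionGraph_reachable_apply σ x).symm

variable {u : Fin (2 * (n + 1))} (hu : u ≠ top₀ n)
include hu

lemma insertTop_apply_self : insertTop σ u u = top₀ n := by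
  simp [insertTop, swap_apply_of_ne_of_ne top₀_ne_top₁ hu.symm]

lemma reachable_swap_insertTop (v : Fin (2 * (n + 1))) :
    (unionGraph (n + 1) (insertTop σ u)).Reachable v (swap (top₁ n) u v) := by
  have hu₁ : (unionGraph (n + 1) (insertTop σ u)).Reachable (top₁ n) u := by
    have h₀ := unionGraph_reachable_m0 (insertTop σ u) (top₀ n)
    have h₁ := unionGraph_reachable_apply (insertTop σ u) u
    rw [m0_top₀] at h₀
    rw [insertTop_apply_self σ hu] at h₁
    exact h₀.symm.trans h₁.symm
  rw [swap_apply_def]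
  split_ifs with h₁ h₂
  · exact h₁ ▸ hu₁
  · exact h₂ ▸ hu₁.symm
  · rfl

lemma reachable_extend_insertTop (v : Fin (2 * (n + 1))) :
    (unionGraph (n + 1) (insertTop σ u)).Reachable v (extend σ v) := by
  have h := unionGraph_reachable_apply (insertTop σ u) (swap (top₁ n) u v)
  simp only [insertTop, Function.comp_apply, swap_apply_self] at h
  exact ((reachable_swap_insertTop σ hu v).trans h).trans
    (reachable_swap_insertTop σ hu (extend σ v)).symm

lemma reachable_low_insertTop {x y : Fin (2 * n)} (h : (unionGraph n σ).Reachable x y) :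
    (unionGraph (n + 1) (insertTop σ u)).Reachable (low n x) (low n y) :=
  unionGraph_reachable_map σ
    (fun v => m0_low v ▸ unionGraph_reachable_m0 _ (low n v))
    (fun v => extend_low σ v ▸ reachable_extend_insertTop σ hu (low n v)) h

lemma reachable_low_out_insertTop (x : Fin (2 * n)) :
    (unionGraph (n + 1) (insertTop σ u)).Reachable
      (low n ((unionGraph n σ).connectedComponentMk x).out) (low n x) :=
  reachable_low_insertTop σ hu (ConnectedComponent.exact (Quot.out_eq _))

omit hu

lemma numComponents_insertTop_top₁ :
    numComponents (n + 1) (insertTop σ (top₁ n)) = numComponents n σ + 1 := by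
  have hins : insertTop σ (top₁ n) = extend σ := by simp [insertTop]
  have hu : top₁ n ≠ top₀ n := top₁_ne_top₀
  rw [numComponents, card_connectedComponent_eq_of_section
    (fun v => (lowerOpt v).map (unionGraph n σ).connectedComponentMk)
    (fun c => c.elim (top₀ n) fun c => low n c.out), Finite.card_option, numComponents]
  · refine unionGraph_eq_of_adj _ (fun v => ?_) (fun v => ?_) <;>
      rcases low_or_top v with ⟨x, rfl⟩ | rfl | rfl <;>
      simp [hins, connectedComponentMk_m0, connectedComponentMk_apply]
  · rintro (_ | c)
    · simp
    · simp only [Option.elim, lowerOpt_low, Option.map_some]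
      exact congrArg some (Quot.out_eq c)
  · intro v
    rcases low_or_top v with ⟨x, rfl⟩ | rfl | rfl
    · simpa using reachable_low_out_insertTop σ hu x
    · simp
    · simpa using unionGraph_reachable_m0 (insertTop σ (top₁ n)) (top₀ n)

/-- When `2n` is matched to a low vertex, the path `u - 2n - 2n+1 - σ u` replaces the edge
`u - σ u`, so the number of components does not change. -/
lemma numComponents_insertTop_low (u : Fin (2 * n)) :
    numComponents (n + 1) (insertTop σ (low n u)) = numComponents n σ := by
  have hu : low n u ≠ top₀ n := low_ne_top₀ u
  set f : Fin (2 * (n + 1)) → (unionGraph n σ).ConnectedComponent :=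
    fun v => (unionGraph n σ).connectedComponentMk ((lowerOpt v).getD u) with hf
  have hswap : ∀ v, f (swap (top₁ n) (low n u) v) = f v := fun v => by
    rw [swap_apply_def]
    split_ifs with h₁ h₂
    · simp [hf, h₁]
    · simp [hf, h₂]
    · rfl
  have hext : ∀ v, f (extend σ v) = f v := fun v => by
    rcases low_or_top v with ⟨x, rfl⟩ | rfl | rfl <;> simp [hf, connectedComponentMk_apply]
  rw [numComponents, card_connectedComponent_eq_of_section f (fun c => low n c.out),
    numComponents]
  · refine unionGraph_eq_of_adj _ (fun v => ?_) (fun v => ?_)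
    · rcases low_or_top v with ⟨x, rfl⟩ | rfl | rfl <;> simp [hf, connectedComponentMk_m0]
    · simp only [insertTop, Function.comp_apply, hswap, hext]
  · intro c
    simp only [hf, lowerOpt_low, Option.getD_some]
    exact Quot.out_eq c
  · intro v
    refine (reachable_low_out_insertTop σ hu _).trans ?_
    rcases low_or_top v with ⟨x, rfl⟩ | rfl | rfl
    · simp
    · simpa [insertTop_apply_self σ hu] using
        unionGraph_reachable_apply (insertTop σ (low n u)) (low n u)
    · simpa using (reachable_swap_insertTop σ hu (top₁ n)).symm

lemma numComponents_insertTop {u : Fin (2 * (n + 1))} (hu : u ≠ top₀ n) :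
    numComponents (n + 1) (insertTop σ u) = numComponents n σ + if u = top₁ n then 1 else 0 := by
  rcases low_or_top u with ⟨u, rfl⟩ | rfl | rfl
  · simp [numComponents_insertTop_low]
  · exact absurd rfl hu
  · simp [numComponents_insertTop_top₁]

end Components

section Expectation

variable (n : ℕ)

lemma card_erase_top₀ : #(univ.erase (top₀ n)) = 2 * n + 1 := by
  rw [card_erase_of_mem (mem_univ _), card_univ, Fintype.card_fin]
  omega

lemma card_perfectMatchings_succ :
    #(perfectMatchings (n + 1)) = (2 * n + 1) * #(perfectMatchings n) := by
  rw [card_eq_sum_ones, sum_perfectMatchings_succ, card_eq_sum_ones, mul_sum]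
  refine sum_congr rfl fun σ _ => ?_
  rw [← card_eq_sum_ones, card_erase_top₀, mul_one]

lemma sum_numComponents_succ :
    ∑ τ ∈ perfectMatchings (n + 1), numComponents (n + 1) τ =
      (2 * n + 1) * ∑ σ ∈ perfectMatchings n, numComponents n σ + #(perfectMatchings n) := by
  rw [sum_perfectMatchings_succ, mul_sum, card_eq_sum_ones, ← sum_add_distrib]
  refine sum_congr rfl fun σ _ => ?_
  rw [sum_congr rfl fun u hu => numComponents_insertTop σ (ne_of_mem_erase hu),
    sum_add_distrib, sum_const, card_erase_top₀, smul_eq_mul, sum_ite_eq',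
    if_pos (mem_erase.2 ⟨top₁_ne_top₀, mem_univ _⟩)]

lemma card_perfectMatchings_pos : 0 < #(perfectMatchings n) := by
  induction n with
  | zero =>
    refine card_pos.2 ⟨id, mem_perfectMatchings.2 ⟨fun _ => rfl, fun x => ?_⟩⟩
    exact absurd x.isLt (by simp)
  | succ n ih =>
    rw [card_perfectMatchings_succ]
    positivity

noncomputable def oddHarmonic (n : ℕ) : ℝ := ∑ k ∈ range n, 1 / (2 * (k : ℝ) + 1)

lemma sum_numComponents_eq :
    ∑ σ ∈ perfectMatchings n, (numComponents n σ : ℝ) =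
      oddHarmonic n * #(perfectMatchings n) := by
  induction n with
  | zero =>
    have : ∀ σ, numComponents 0 σ = 0 := fun σ => by
      have : IsEmpty (Fin (2 * 0)) := ⟨fun x => absurd x.isLt (by simp)⟩
      exact Nat.card_of_isEmpty
    simp [this, oddHarmonic]
  | succ n ih =>
    have h := congrArg (Nat.cast : ℕ → ℝ) (sum_numComponents_succ n)
    push_cast at h
    have hodd : oddHarmonic (n + 1) = oddHarmonic n + 1 / (2 * n + 1) := sum_range_succ _ _
    rw [h, ih, card_perfectMatchings_succ, hodd]
    push_cast
    field_simp

lemma oddHarmonic_le_one_add_log : oddHarmonic n ≤ 1 + Real.log n := by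
  refine le_trans ?_ (harmonic_le_one_add_log n)
  simp only [oddHarmonic, harmonic, Rat.cast_sum, Rat.cast_inv, Rat.cast_natCast]
  refine sum_le_sum fun k _ => ?_
  rw [one_div]
  gcongr
  push_cast
  linarith [(k.cast_nonneg : (0 : ℝ) ≤ k)]

end Expectation

lemma card_filter_lt_mul_le_sum {ι : Type*} (s : Finset ι) {f : ι → ℝ} (hf : ∀ i ∈ s, 0 ≤ f i)
    (t : ℝ) : #(s.filter (fun i => t < f i)) * t ≤ ∑ i ∈ s, f i :=
  calc #(s.filter (fun i => t < f i)) * t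
      ≤ ∑ i ∈ s.filter (fun i => t < f i), f i := by
        simpa using card_nsmul_le_sum _ f t fun i hi => (mem_filter.1 hi).2.le
    _ ≤ ∑ i ∈ s, f i := sum_le_sum_of_subset_of_nonneg (filter_subset _ _)
        fun i hi _ => hf i hi

lemma prFewComponents_eq (n : ℕ) :
    prFewComponents n = 1 - #((perfectMatchings n).filter
      (fun σ => Real.log n ^ 2 < numComponents n σ)) / #(perfectMatchings n) := by
  have hpos : (0 : ℝ) < #(perfectMatchings n) := by exact_mod_cast card_perfectMatchings_pos n
  have hsplit := card_filter_add_card_filter_not (s := perfectMatchings n)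
    (fun σ => (numComponents n σ : ℝ) ≤ Real.log n ^ 2)
  simp only [not_le] at hsplit
  have hgood : prFewComponents n = #((perfectMatchings n).filter
      (fun σ => (numComponents n σ : ℝ) ≤ Real.log n ^ 2)) / #(perfectMatchings n) := by
    rw [prFewComponents, perfectMatchings, filter_filter]
    rfl
  rw [hgood, eq_sub_iff_add_eq, ← add_div, div_eq_one_iff_eq hpos.ne']
  exact_mod_cast hsplit

lemma prFewComponents_le_one (n : ℕ) : prFewComponents n ≤ 1 := by
  rw [prFewComponents_eq, sub_le_self_iff]
  positivity

lemma one_sub_le_prFewComponents {n : ℕ} (hn : 3 ≤ n) :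
    1 - 2 / Real.log n ≤ prFewComponents n := by
  have hpos : (0 : ℝ) < #(perfectMatchings n) := by exact_mod_cast card_perfectMatchings_pos n
  have hlog : 1 ≤ Real.log n := by
    have : (3 : ℝ) ≤ n := by exact_mod_cast hn
    rw [Real.le_log_iff_exp_le (by positivity)]
    linarith [Real.exp_one_lt_d9]
  have hharm : oddHarmonic n ≤ 2 * Real.log n := by
    linarith [oddHarmonic_le_one_add_log n]
  have markov := card_filter_lt_mul_le_sum (perfectMatchings n)
    (fun σ _ => (numComponents n σ).cast_nonneg) (Real.log n ^ 2)
  rw [sum_numComponents_eq] at markov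
  set bad := #((perfectMatchings n).filter (fun σ => Real.log n ^ 2 < numComponents n σ))
  have hbad : (bad : ℝ) / #(perfectMatchings n) ≤ 2 / Real.log n := by
    rw [div_le_div_iff₀ hpos (by positivity)]
    refine le_of_mul_le_mul_right ?_ (by positivity : 0 < Real.log n)
    calc (bad : ℝ) * Real.log n * Real.log n = bad * Real.log n ^ 2 := by ring
      _ ≤ oddHarmonic n * #(perfectMatchings n) := markov
      _ ≤ 2 * Real.log n * #(perfectMatchings n) := by gcongr
      _ = 2 * #(perfectMatchings n) * Real.log n := by ring
  rw [prFewComponents_eq]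
  linarith

theorem few_components_whp :
    Filter.Tendsto prFewComponents Filter.atTop (nhds 1) := by
  have hlog : Filter.Tendsto (fun n : ℕ => 2 / Real.log n) Filter.atTop (nhds 0) :=
    tendsto_const_nhds.div_atTop (Real.tendsto_log_atTop.comp tendsto_natCast_atTop_atTop)
  refine tendsto_of_tendsto_of_tendsto_of_le_of_le' (by simpa using hlog.const_sub 1)
    tendsto_const_nhds ?_ (Filter.Eventually.of_forall prFewComponents_le_one)
  filter_upwards [Filter.eventually_ge_atTop 3] with n hn
  exact one_sub_le_prFewComponents hn

end Stmt11
end
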